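/- Let G be a subcubic graph with a bipartition P, let r1r2 and s1s2 be two P-odd edges, and let R1 = r1...s1 and R2 = r2...s2 be two disjoint paths consisting of P-even edges. If G contains no skewed theta, then G cannot contain three edge-disjoint R1–R2-paths consisting of P-even edges. -/

import Mathlib

open SimpleGraph

attribute [local instance] Classical.propDecidable

universe u

variable {V : Type u}

/-- A graph is subcubic if every vertex has degree (number of neighbours) at most 3. -/
def Subcubic (G : SimpleGraph V) : Prop := ∀ v : V, (G.neighborSet v).ncard ≤ 3

/-- Two walks are edge-disjoint if they share no edge. -/
def WalkEdgeDisjoint {G : SimpleGraph V} {a b c d : V}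
    (p : G.Walk a b) (q : G.Walk c d) : Prop :=
  ∀ e, e ∈ p.edges → e ∉ q.edges

/-- A skewed theta: two branch vertices joined by three pairwise edge-disjoint paths,
two of odd length and one of even length. -/
def HasSkewedTheta (G : SimpleGraph V) : Prop :=
  ∃ (a b : V) (p₁ p₂ p₃ : G.Walk a b),
    p₁.IsPath ∧ p₂.IsPath ∧ p₃.IsPath ∧
    WalkEdgeDisjoint p₁ p₂ ∧ WalkEdgeDisjoint p₁ p₃ ∧ WalkEdgeDisjoint p₂ p₃ ∧
    Odd p₁.length ∧ Odd p₂.length ∧ Even p₃.length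

/-- A graph is 2-connected: at least 3 vertices and deleting any vertex leaves it connected. -/
def TwoConnected (G : SimpleGraph V) : Prop :=
  3 ≤ Nat.card V ∧ ∀ v : V, ((⊤ : G.Subgraph).deleteVerts {v}).coe.Connected

/-- Given a bipartition with first class `A`, an edge is `P`-odd if both of its
endvertices lie in the same class. -/
def POdd (A : Set V) (e : Sym2 V) : Prop :=
  (∀ x ∈ e, x ∈ A) ∨ (∀ x ∈ e, x ∉ A)

/-- A stable (independent) set of vertices. -/
def StableSet (G : SimpleGraph V) (s : Set V) : Prop :=
  s.Pairwise fun a b => ¬ G.Adj a b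

/-- `u` is the centre of an induced claw. -/
def HasInducedClawAt (G : SimpleGraph V) (u : V) : Prop :=
  ∃ a b c : V, G.Adj u a ∧ G.Adj u b ∧ G.Adj u c ∧
    a ≠ b ∧ a ≠ c ∧ b ≠ c ∧ ¬ G.Adj a b ∧ ¬ G.Adj a c ∧ ¬ G.Adj b c

/-- A graph is claw-free if it has no induced claw. -/
def ClawFree (G : SimpleGraph V) : Prop := ∀ u : V, ¬ HasInducedClawAt G u

/-- The t-contraction of `G` at a vertex `v`: the neighbours of `v` are removed,
and `v` becomes adjacent to all former second neighbours. -/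
def tContract (G : SimpleGraph V) (v : V) :
    SimpleGraph {w : V // w ∉ G.neighborSet v} :=
  SimpleGraph.fromRel (fun a b =>
    G.Adj a b ∨ ((a : V) = v ∧ ∃ n : V, G.Adj v n ∧ G.Adj n (b : V)))

/-- One step in the formation of a t-minor: delete a vertex, or perform a
t-contraction at a vertex whose neighbourhood is stable. -/
def TStep {W W' : Type u} (G : SimpleGraph W) (H : SimpleGraph W') : Prop :=
  (∃ v : W, Nonempty (H ≃g (G.induce {w : W | w ≠ v}))) ∨
  (∃ v : W, StableSet G (G.neighborSet v) ∧ Nonempty (H ≃g tContract G v))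

/-- `H` is a t-minor of `G` if it is obtained by a series of vertex deletions
and t-contractions. -/
def IsTMinor {W W' : Type u} (G : SimpleGraph W) (H : SimpleGraph W') : Prop :=
  Relation.ReflTransGen (fun a b : (Σ U : Type u, SimpleGraph U) => TStep a.2 b.2)
    ⟨W, G⟩ ⟨W', H⟩

/-- The stable set polytope of `G`: the convex hull of characteristic vectors of stable sets. -/
noncomputable def stableSetPolytope (G : SimpleGraph V) : Set (V → ℝ) :=
  convexHull ℝ {x : V → ℝ | ∃ s : Set V, StableSet G s ∧ x = s.indicator 1}

/-- The polytope given by non-negativity, edge and odd-cycle inequalities. -/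
def TSTAB (G : SimpleGraph V) [Fintype V] : Set (V → ℝ) :=
  {x : V → ℝ |
    (∀ v : V, 0 ≤ x v ∧ x v ≤ 1) ∧
    (∀ u v : V, G.Adj u v → x u + x v ≤ 1) ∧
    (∀ (v : V) (c : G.Walk v v), c.IsCycle → Odd c.length →
      ∑ u ∈ c.support.toFinset, x u ≤ ((c.length / 2 : ℕ) : ℝ))}

/-- A graph is t-perfect if its stable set polytope coincides with `TSTAB`. -/
def TPerfect (G : SimpleGraph V) [Fintype V] : Prop :=
  stableSetPolytope G = TSTAB G

/-- The complete graph on four vertices. -/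
def K4 : SimpleGraph (Fin 4) := ⊤

/-- The 5-wheel: a 5-cycle (on `0,…,4`) plus a hub (`5`) adjacent to all cycle vertices. -/
def W5 : SimpleGraph (Fin 6) :=
  SimpleGraph.fromRel (fun i j =>
    (j : ℕ) = 5 ∨ ((i : ℕ) < 5 ∧ (j : ℕ) < 5 ∧ (j : ℕ) = ((i : ℕ) + 1) % 5))

/-- The 5-cycle. -/
def C5 : SimpleGraph (Fin 5) :=
  SimpleGraph.fromRel (fun i j => (j : ℕ) = ((i : ℕ) + 1) % 5)

/-- An induced path of `G` all of whose vertices lie in `S`. -/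
def IsInducedPathIn (G : SimpleGraph V) (S : Set V) {a b : V} (p : G.Walk a b) : Prop :=
  p.IsPath ∧ (∀ x ∈ p.support, x ∈ S) ∧
    ∀ x y : V, x ∈ p.support → y ∈ p.support → G.Adj x y → s(x, y) ∈ p.edges

/-- The data of a skewed prism: two triangles `x₁x₂x₃`, `y₁y₂y₃` joined by three
vertex-disjoint induced paths `P₁,P₂,P₃`, where `P₁,P₂` are even and `P₃` is odd, and
the triangle edges are the only edges between the paths. -/
def IsSkewedPrism (G : SimpleGraph V) (x₁ x₂ x₃ y₁ y₂ y₃ : V)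
    (P₁ : G.Walk x₁ y₁) (P₂ : G.Walk x₂ y₂) (P₃ : G.Walk x₃ y₃) : Prop :=
  P₁.IsPath ∧ P₂.IsPath ∧ P₃.IsPath ∧
  Even P₁.length ∧ Even P₂.length ∧ Odd P₃.length ∧
  P₁.support.Disjoint P₂.support ∧ P₁.support.Disjoint P₃.support ∧
  P₂.support.Disjoint P₃.support ∧
  G.Adj x₁ x₂ ∧ G.Adj x₁ x₃ ∧ G.Adj x₂ x₃ ∧
  G.Adj y₁ y₂ ∧ G.Adj y₁ y₃ ∧ G.Adj y₂ y₃ ∧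
  (∀ u w : V, u ∈ P₁.support ++ P₂.support ++ P₃.support →
    w ∈ P₁.support ++ P₂.support ++ P₃.support →
    (G.Adj u w ↔ (s(u, w) ∈ P₁.edges ∨ s(u, w) ∈ P₂.edges ∨ s(u, w) ∈ P₃.edges ∨
      s(u, w) ∈ [s(x₁, x₂), s(x₁, x₃), s(x₂, x₃), s(y₁, y₂), s(y₁, y₃), s(y₂, y₃)])))

/-- `G` contains a skewed prism as an induced subgraph. -/
def HasSkewedPrism (G : SimpleGraph V) : Prop :=
  ∃ (x₁ x₂ x₃ y₁ y₂ y₃ : V) (P₁ : G.Walk x₁ y₁) (P₂ : G.Walk x₂ y₂) (P₃ : G.Walk x₃ y₃),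
    IsSkewedPrism G x₁ x₂ x₃ y₁ y₂ y₃ P₁ P₂ P₃

/-- A `u`–`v`-linked obstruction with all vertices inside `S`: four vertex-disjoint
induced paths `R = u…r`, `S' = v…s`, `X = x₁…x₂`, `Y = y₁…y₂` with triangles
`r,x₁,y₁` and `s,x₂,y₂`, the triangle edges being the only edges between the paths,
and `X` of even length. -/
def IsLinkedObstructionIn (G : SimpleGraph V) (S : Set V) (u v : V) : Prop :=
  ∃ (r s x₁ x₂ y₁ y₂ : V) (R : G.Walk u r) (S' : G.Walk v s)
    (X : G.Walk x₁ x₂) (Y : G.Walk y₁ y₂),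
    R.IsPath ∧ S'.IsPath ∧ X.IsPath ∧ Y.IsPath ∧ Even X.length ∧
    (∀ w ∈ R.support, w ∈ S) ∧ (∀ w ∈ S'.support, w ∈ S) ∧
    (∀ w ∈ X.support, w ∈ S) ∧ (∀ w ∈ Y.support, w ∈ S) ∧
    R.support.Disjoint S'.support ∧ R.support.Disjoint X.support ∧
    R.support.Disjoint Y.support ∧ S'.support.Disjoint X.support ∧
    S'.support.Disjoint Y.support ∧ X.support.Disjoint Y.support ∧
    G.Adj r x₁ ∧ G.Adj r y₁ ∧ G.Adj x₁ y₁ ∧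
    G.Adj s x₂ ∧ G.Adj s y₂ ∧ G.Adj x₂ y₂ ∧
    (∀ a b : V, a ∈ R.support ++ S'.support ++ X.support ++ Y.support →
      b ∈ R.support ++ S'.support ++ X.support ++ Y.support →
      (G.Adj a b ↔ (s(a, b) ∈ R.edges ∨ s(a, b) ∈ S'.edges ∨ s(a, b) ∈ X.edges ∨
        s(a, b) ∈ Y.edges ∨
        s(a, b) ∈ [s(r, x₁), s(r, y₁), s(x₁, y₁), s(s, x₂), s(s, y₂), s(x₂, y₂)])))

/-!
The paths `R₁`, `R₂` and the edges `r₁r₂`, `s₁s₂` form a cycle `C` whose only `P`-odd edges are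
`r₁r₂` and `s₁s₂`. A path all of whose edges are `P`-even has even length iff its ends lie in the
same class, and one with exactly one `P`-odd edge iff they lie in different classes.

An even `R₁`–`R₂`-path `X` thus splits `C` into two odd paths, which form a skewed theta with `X`.
If all three `R₁`–`R₂`-paths are odd, two of them, `X` and `Y`, start in the same class; let `Y`
start after `X` on `R₁`. If `Y` also ends after `X` on `R₂`, then `X`, the detour through `Y`
and the route through `r₁r₂` form a skewed theta between the ends of `X`; otherwise `X` followed
by `R₂`, `R₁` followed by `Y`, and the route through `r₁r₂` form one between the start of `X` and
the end of `Y`, which lie in different classes. If `r₁r₂ = s₁s₂`, the paths `R₁`, `R₂` are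
trivial and the three paths leave `r₁` along distinct `P`-even edges, so `r₁` has degree four.
-/

lemma pOdd_mk_iff {A : Set V} {x y : V} : POdd A s(x, y) ↔ (x ∈ A ↔ y ∈ A) := by
  simp only [POdd, Sym2.mem_iff, forall_eq_or_imp, forall_eq]
  tauto

namespace SimpleGraph.Walk

variable {G : SimpleGraph V} {A : Set V} {u v w x y a b : V}

def IsPEven (A : Set V) (p : G.Walk u v) : Prop := ∀ e ∈ p.edges, ¬ POdd A e

namespace IsPEven

lemma mono {p : G.Walk u v} {q : G.Walk x y} (hq : q.IsPEven A) (h : p.edges ⊆ q.edges) :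
    p.IsPEven A :=
  fun e he => hq e (h he)

lemma reverse {p : G.Walk u v} (hp : p.IsPEven A) : p.reverse.IsPEven A :=
  hp.mono (by simp)

lemma append {p : G.Walk u v} {q : G.Walk v w} (hp : p.IsPEven A) (hq : q.IsPEven A) :
    (p.append q).IsPEven A := by
  intro e he
  rcases List.mem_append.mp (edges_append p q ▸ he) with he | he
  exacts [hp e he, hq e he]

lemma not_mem_edges {p : G.Walk u v} (hp : p.IsPEven A) {e : Sym2 V} (he : POdd A e) :
    e ∉ p.edges :=
  fun h => hp e h he

lemma even_length_iff {p : G.Walk u v} (hp : p.IsPEven A) :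
    Even p.length ↔ (u ∈ A ↔ v ∈ A) := by
  induction p with
  | nil => simp
  | @cons x z y h p ih =>
    have hxz : ¬ (x ∈ A ↔ z ∈ A) := pOdd_mk_iff.not.mp (hp _ (by simp))
    rw [length_cons, Nat.even_add_one, ih (hp.mono (by simp))]
    tauto

end IsPEven

lemma even_length_append_cons_iff {p : G.Walk x a} {q : G.Walk b y} (hab : G.Adj a b)
    (hp : p.IsPEven A) (hq : q.IsPEven A) (hodd : POdd A s(a, b)) :
    Even (p.append (cons hab q)).length ↔ ¬ (x ∈ A ↔ y ∈ A) := by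
  rw [length_append, length_cons, ← add_assoc, Nat.even_add_one, Nat.even_add,
    hp.even_length_iff, hq.even_length_iff, ← pOdd_mk_iff.mp hodd]
  tauto

protected lemma IsPath.append {p : G.Walk u v} {q : G.Walk v w} (hp : p.IsPath)
    (hq : q.IsPath) (h : ∀ z ∈ p.support, z ∈ q.support → z = v) : (p.append q).IsPath := by
  rw [isPath_def, support_append]
  refine hp.support_nodup.append (hq.support_nodup.sublist q.support.tail_sublist) ?_
  intro z hzp hzq
  obtain rfl := h z hzp (List.mem_of_mem_tail hzq)
  have hnodup := hq.support_nodup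
  rw [← cons_tail_support] at hnodup
  exact (List.nodup_cons.mp hnodup).1 hzq

lemma IsPath.append_cons {p : G.Walk x a} {q : G.Walk b y} (hp : p.IsPath) (hq : q.IsPath)
    (hab : G.Adj a b) (h : p.support.Disjoint q.support) : (p.append (cons hab q)).IsPath := by
  refine hp.append ((cons_isPath_iff hab q).mpr ⟨hq, fun hq' => h p.end_mem_support hq'⟩) ?_
  intro z hzp hzq
  rcases List.mem_cons.mp (support_cons hab q ▸ hzq) with rfl | hzq
  · rfl
  · exact absurd hzq (h hzp)

lemma mem_support_dropUntil_or (p : G.Walk u v) (hx : x ∈ p.support) (hy : y ∈ p.support) :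
    y ∈ (p.dropUntil x hx).support ∨ x ∈ (p.dropUntil y hy).support := by
  induction p with
  | nil =>
    obtain rfl := mem_support_nil_iff.mp hx
    simp
  | @cons u z v h p ih =>
    by_cases hux : u = x
    · subst hux; left; rwa [dropUntil_first]
    by_cases huy : u = y
    · subst huy; right; rwa [dropUntil_first]
    have hx' : x ∈ p.support := by simpa [Ne.symm hux] using hx
    have hy' : y ∈ p.support := by simpa [Ne.symm huy] using hy
    simpa [dropUntil, hux, huy] using ih hx' hy'

lemma edges_disjoint_of_forall_eq {p : G.Walk u v} {q : G.Walk x y}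
    (h : ∀ z ∈ p.support, z ∈ q.support → z = w) : p.edges.Disjoint q.edges := by
  intro e hp hq
  induction e using Sym2.ind with
  | _ a b =>
    have ha := h a (p.fst_mem_support_of_mem_edges hp) (q.fst_mem_support_of_mem_edges hq)
    have hb := h b (p.snd_mem_support_of_mem_edges hp) (q.snd_mem_support_of_mem_edges hq)
    exact (p.adj_of_mem_edges hp).ne (ha.trans hb.symm)

lemma edges_disjoint_of_support_disjoint {p : G.Walk u v} {q : G.Walk x y}
    (h : p.support.Disjoint q.support) : p.edges.Disjoint q.edges :=
  edges_disjoint_of_forall_eq (w := u) fun _ hp hq => absurd hq (h hp)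

end SimpleGraph.Walk

open Walk

section Frame

variable {G : SimpleGraph V} {A : Set V} {r₁ r₂ s₁ s₂ : V}

structure IsEvenFrame (A : Set V) (R₁ : G.Walk r₁ s₁) (R₂ : G.Walk r₂ s₂) : Prop where
  adj_start : G.Adj r₁ r₂
  adj_end : G.Adj s₁ s₂
  pOdd_start : POdd A s(r₁, r₂)
  pOdd_end : POdd A s(s₁, s₂)
  isPath_left : R₁.IsPath
  isPath_right : R₂.IsPath
  disjoint : R₁.support.Disjoint R₂.support
  isPEven_left : R₁.IsPEven A
  isPEven_right : R₂.IsPEven A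

/-- A `P`-even `R₁`–`R₂`-path. -/
structure IsEvenLink (A : Set V) (R₁ : G.Walk r₁ s₁) (R₂ : G.Walk r₂ s₂) {x₁ x₂ : V}
    (X : G.Walk x₁ x₂) : Prop where
  isPath : X.IsPath
  mem_left : x₁ ∈ R₁.support
  mem_right : x₂ ∈ R₂.support
  isPEven : X.IsPEven A
  internal : ∀ x ∈ X.support, x ≠ x₁ → x ≠ x₂ → x ∉ R₁.support ∧ x ∉ R₂.support

variable {R₁ : G.Walk r₁ s₁} {R₂ : G.Walk r₂ s₂}

namespace IsEvenFrame

variable (hF : IsEvenFrame A R₁ R₂)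
include hF

lemma edges_disjoint : R₁.edges.Disjoint R₂.edges :=
  edges_disjoint_of_support_disjoint hF.disjoint

lemma startEdge_not_mem_edges : s(r₁, r₂) ∉ R₁.edges ∧ s(r₁, r₂) ∉ R₂.edges :=
  ⟨fun h => hF.disjoint (R₁.snd_mem_support_of_mem_edges h) R₂.start_mem_support,
    fun h => hF.disjoint R₁.start_mem_support (R₂.fst_mem_support_of_mem_edges h)⟩

lemma endEdge_not_mem_edges : s(s₁, s₂) ∉ R₁.edges ∧ s(s₁, s₂) ∉ R₂.edges :=
  ⟨fun h => hF.disjoint (R₁.snd_mem_support_of_mem_edges h) R₂.end_mem_support,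
    fun h => hF.disjoint R₁.end_mem_support (R₂.fst_mem_support_of_mem_edges h)⟩

end IsEvenFrame

namespace IsEvenLink

variable {x₁ x₂ : V} {X : G.Walk x₁ x₂} (hX : IsEvenLink A R₁ R₂ X)
  (hR : R₁.support.Disjoint R₂.support)
include hX hR

lemma eq_of_mem_left : ∀ z ∈ X.support, z ∈ R₁.support → z = x₁ := by
  intro z hz hzR
  by_contra hne
  by_cases hz₂ : z = x₂
  · exact hR hzR (hz₂ ▸ hX.mem_right)
  · exact (hX.internal z hz hne hz₂).1 hzR

lemma eq_of_mem_right : ∀ z ∈ X.support, z ∈ R₂.support → z = x₂ := by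
  intro z hz hzR
  by_contra hne
  by_cases hz₁ : z = x₁
  · exact hR (hz₁ ▸ hX.mem_left) hzR
  · exact (hX.internal z hz hz₁ hne).2 hzR

lemma edges_disjoint_left : X.edges.Disjoint R₁.edges :=
  edges_disjoint_of_forall_eq (hX.eq_of_mem_left hR)

lemma edges_disjoint_right : X.edges.Disjoint R₂.edges :=
  edges_disjoint_of_forall_eq (hX.eq_of_mem_right hR)

lemma isPath_extend {a b : V} {S : G.Walk a x₁} {S' : G.Walk x₂ b} (hS : S.IsPath)
    (hS' : S'.IsPath) (hSR : S.support ⊆ R₁.support) (hSR' : S'.support ⊆ R₂.support) :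
    (S.append (X.append S')).IsPath := by
  refine hS.append (hX.isPath.append hS' fun z hzX hzS => hX.eq_of_mem_right hR z hzX (hSR' hzS)) ?_
  intro z hzS hz
  rcases (mem_support_append_iff _ _).mp hz with hzX | hzS'
  · exact hX.eq_of_mem_left hR z hzX (hSR hzS)
  · exact absurd (hSR' hzS') (hR (hSR hzS))

end IsEvenLink

namespace IsEvenFrame

variable (hF : IsEvenFrame A R₁ R₂)
include hF

lemma isPath_append_cons {x a b y : V} {p : G.Walk x a} {q : G.Walk b y} (hp : p.IsPath)
    (hq : q.IsPath) (hpR : p.support ⊆ R₁.support) (hqR : q.support ⊆ R₂.support)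
    (hab : G.Adj a b) : (p.append (cons hab q)).IsPath :=
  hp.append_cons hq hab
    (List.disjoint_of_subset_left hpR (List.disjoint_of_subset_right hqR hF.disjoint))

noncomputable def startBridge {x y : V} (hx : x ∈ R₁.support) (hy : y ∈ R₂.support) : G.Walk x y :=
  (R₁.takeUntil x hx).reverse.append (cons hF.adj_start (R₂.takeUntil y hy))

variable {x y : V} (hx : x ∈ R₁.support) (hy : y ∈ R₂.support)

lemma mem_edges_startBridge_iff {e : Sym2 V} : e ∈ (hF.startBridge hx hy).edges ↔
    e ∈ (R₁.takeUntil x hx).edges ∨ e = s(r₁, r₂) ∨ e ∈ (R₂.takeUntil y hy).edges := by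
  simp [startBridge]

lemma isPath_startBridge : (hF.startBridge hx hy).IsPath :=
  hF.isPath_append_cons (hF.isPath_left.takeUntil hx).reverse (hF.isPath_right.takeUntil hy)
    (by simpa using R₁.support_takeUntil_subset_support hx)
    (R₂.support_takeUntil_subset_support hy) _

lemma even_length_startBridge_iff : Even (hF.startBridge hx hy).length ↔ ¬ (x ∈ A ↔ y ∈ A) :=
  even_length_append_cons_iff _
    (hF.isPEven_left.mono (R₁.edges_takeUntil_subset_edges hx)).reverse
    (hF.isPEven_right.mono (R₂.edges_takeUntil_subset_edges hy)) hF.pOdd_start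

theorem hasSkewedTheta_of_even_link (hne : s(r₁, r₂) ≠ s(s₁, s₂)) {x₁ x₂ : V}
    {X : G.Walk x₁ x₂} (hX : IsEvenLink A R₁ R₂ X) (heven : x₁ ∈ A ↔ x₂ ∈ A) :
    HasSkewedTheta G := by
  have hx₁ := hX.mem_left
  have hx₂ := hX.mem_right
  set D₁ := R₁.dropUntil x₁ hx₁
  set D₂ := R₂.dropUntil x₂ hx₂
  set W := D₁.append (cons hF.adj_end D₂.reverse)
  have hW : W.IsPath :=
    hF.isPath_append_cons (hF.isPath_left.dropUntil hx₁) (hF.isPath_right.dropUntil hx₂).reverse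
      (R₁.support_dropUntil_subset_support hx₁)
      (by simpa using R₂.support_dropUntil_subset_support hx₂) _
  have hWodd : Odd W.length := by
    rw [← Nat.not_even_iff_odd, even_length_append_cons_iff _
      (hF.isPEven_left.mono (R₁.edges_dropUntil_subset_edges hx₁))
      (hF.isPEven_right.mono (R₂.edges_dropUntil_subset_edges hx₂)).reverse hF.pOdd_end]
    exact not_not_intro heven
  have hBodd : Odd (hF.startBridge hx₁ hx₂).length := by
    rw [← Nat.not_even_iff_odd, hF.even_length_startBridge_iff]
    exact not_not_intro heven
  refine ⟨x₁, x₂, hF.startBridge hx₁ hx₂, W, X, hF.isPath_startBridge hx₁ hx₂, hW, hX.isPath,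
    ?_, ?_, ?_, hBodd, hWodd, hX.isPEven.even_length_iff.mpr heven⟩
  all_goals grind [WalkEdgeDisjoint, hF.mem_edges_startBridge_iff, edges_append, edges_cons,
      edges_reverse, List.disjoint_left,
      R₁.edges_takeUntil_subset_edges hx₁, R₁.edges_dropUntil_subset_edges hx₁,
      R₂.edges_takeUntil_subset_edges hx₂, R₂.edges_dropUntil_subset_edges hx₂,
      hF.isPath_left.isTrail.disjoint_edges_takeUntil_dropUntil hx₁,
      hF.isPath_right.isTrail.disjoint_edges_takeUntil_dropUntil hx₂,
      hF.edges_disjoint, hF.startEdge_not_mem_edges, hF.endEdge_not_mem_edges,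
      hX.edges_disjoint_left hF.disjoint, hX.edges_disjoint_right hF.disjoint,
      hX.isPEven.not_mem_edges hF.pOdd_start, hX.isPEven.not_mem_edges hF.pOdd_end]

theorem hasSkewedTheta_of_parallel_links {x₁ x₂ y₁ y₂ : V} {X : G.Walk x₁ x₂}
    {Y : G.Walk y₁ y₂} (hX : IsEvenLink A R₁ R₂ X) (hY : IsEvenLink A R₁ R₂ Y)
    (hXY : WalkEdgeDisjoint X Y) (hodd : ¬ (x₁ ∈ A ↔ x₂ ∈ A))
    (h₁ : y₁ ∈ (R₁.dropUntil x₁ hX.mem_left).support)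
    (h₂ : y₂ ∈ (R₂.dropUntil x₂ hX.mem_right).support) :
    HasSkewedTheta G := by
  have hx₁ := hX.mem_left
  have hx₂ := hX.mem_right
  set D₁ := R₁.dropUntil x₁ hx₁
  set D₂ := R₂.dropUntil x₂ hx₂
  set S₁ := D₁.takeUntil y₁ h₁
  set S₂ := D₂.takeUntil y₂ h₂
  have hS₁ : S₁.IsSubwalk R₁ := (D₁.isSubwalk_takeUntil h₁).trans (R₁.isSubwalk_dropUntil hx₁)
  have hS₂ : S₂.IsSubwalk R₂ := (D₂.isSubwalk_takeUntil h₂).trans (R₂.isSubwalk_dropUntil hx₂)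
  set W := S₁.append (Y.append S₂.reverse)
  have hW : W.IsPath :=
    hY.isPath_extend hF.disjoint (isPath_of_isSubwalk hS₁ hF.isPath_left)
      (isPath_of_isSubwalk hS₂ hF.isPath_right).reverse hS₁.support_subset
      (by simpa using hS₂.support_subset)
  have hWodd : Odd W.length := by
    rw [← Nat.not_even_iff_odd, ((hF.isPEven_left.mono hS₁.edges_subset).append
      (hY.isPEven.append (hF.isPEven_right.mono hS₂.edges_subset).reverse)).even_length_iff]
    exact hodd
  refine ⟨x₁, x₂, X, W, hF.startBridge hx₁ hx₂, hX.isPath, hW, hF.isPath_startBridge hx₁ hx₂,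
    ?_, ?_, ?_, Nat.not_even_iff_odd.mp (hodd ∘ hX.isPEven.even_length_iff.mp), hWodd,
    (hF.even_length_startBridge_iff hx₁ hx₂).mpr hodd⟩
  all_goals grind [WalkEdgeDisjoint, hF.mem_edges_startBridge_iff, edges_append, edges_reverse,
      List.disjoint_left,
      R₁.edges_takeUntil_subset_edges hx₁, R₁.edges_dropUntil_subset_edges hx₁,
      R₂.edges_takeUntil_subset_edges hx₂, R₂.edges_dropUntil_subset_edges hx₂,
      D₁.edges_takeUntil_subset_edges h₁, D₂.edges_takeUntil_subset_edges h₂,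
      hF.isPath_left.isTrail.disjoint_edges_takeUntil_dropUntil hx₁,
      hF.isPath_right.isTrail.disjoint_edges_takeUntil_dropUntil hx₂,
      hF.edges_disjoint, hF.startEdge_not_mem_edges,
      hX.edges_disjoint_left hF.disjoint, hX.edges_disjoint_right hF.disjoint,
      hY.edges_disjoint_left hF.disjoint, hY.edges_disjoint_right hF.disjoint,
      hX.isPEven.not_mem_edges hF.pOdd_start, hY.isPEven.not_mem_edges hF.pOdd_start]

theorem hasSkewedTheta_of_crossing_links {x₁ x₂ y₁ y₂ : V} {X : G.Walk x₁ x₂}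
    {Y : G.Walk y₁ y₂} (hX : IsEvenLink A R₁ R₂ X) (hY : IsEvenLink A R₁ R₂ Y)
    (hXY : WalkEdgeDisjoint X Y) (hodd : ¬ (x₁ ∈ A ↔ y₂ ∈ A))
    (h₁ : y₁ ∈ (R₁.dropUntil x₁ hX.mem_left).support)
    (h₂ : x₂ ∈ (R₂.dropUntil y₂ hY.mem_right).support) :
    HasSkewedTheta G := by
  have hx₁ := hX.mem_left
  have hy₂ := hY.mem_right
  set D₁ := R₁.dropUntil x₁ hx₁
  set D₂ := R₂.dropUntil y₂ hy₂
  set S₁ := D₁.takeUntil y₁ h₁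
  set S₂ := D₂.takeUntil x₂ h₂
  have hS₁ : S₁.IsSubwalk R₁ := (D₁.isSubwalk_takeUntil h₁).trans (R₁.isSubwalk_dropUntil hx₁)
  have hS₂ : S₂.IsSubwalk R₂ := (D₂.isSubwalk_takeUntil h₂).trans (R₂.isSubwalk_dropUntil hy₂)
  set W₁ := X.append S₂.reverse
  set W₂ := S₁.append Y
  have hW₁ : W₁.IsPath :=
    hX.isPath_extend hF.disjoint IsPath.nil (isPath_of_isSubwalk hS₂ hF.isPath_right).reverse
      (by simpa using hX.mem_left) (by simpa using hS₂.support_subset)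
  have hW₂ : W₂.IsPath := by
    simpa using hY.isPath_extend hF.disjoint (isPath_of_isSubwalk hS₁ hF.isPath_left) IsPath.nil
      hS₁.support_subset (by simpa using hy₂)
  have hW₁odd : Odd W₁.length := by
    rw [← Nat.not_even_iff_odd, (hX.isPEven.append
      (hF.isPEven_right.mono hS₂.edges_subset).reverse).even_length_iff]
    exact hodd
  have hW₂odd : Odd W₂.length := by
    rw [← Nat.not_even_iff_odd,
      ((hF.isPEven_left.mono hS₁.edges_subset).append hY.isPEven).even_length_iff]
    exact hodd
  refine ⟨x₁, y₂, W₁, W₂, hF.startBridge hx₁ hy₂, hW₁, hW₂, hF.isPath_startBridge hx₁ hy₂,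
    ?_, ?_, ?_, hW₁odd, hW₂odd, (hF.even_length_startBridge_iff hx₁ hy₂).mpr hodd⟩
  all_goals grind [WalkEdgeDisjoint, hF.mem_edges_startBridge_iff, edges_append, edges_reverse,
      List.disjoint_left,
      R₁.edges_takeUntil_subset_edges hx₁, R₁.edges_dropUntil_subset_edges hx₁,
      R₂.edges_takeUntil_subset_edges hy₂, R₂.edges_dropUntil_subset_edges hy₂,
      D₁.edges_takeUntil_subset_edges h₁, D₂.edges_takeUntil_subset_edges h₂,
      hF.isPath_left.isTrail.disjoint_edges_takeUntil_dropUntil hx₁,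
      hF.isPath_right.isTrail.disjoint_edges_takeUntil_dropUntil hy₂,
      hF.edges_disjoint, hF.startEdge_not_mem_edges,
      hX.edges_disjoint_left hF.disjoint, hX.edges_disjoint_right hF.disjoint,
      hY.edges_disjoint_left hF.disjoint, hY.edges_disjoint_right hF.disjoint,
      hX.isPEven.not_mem_edges hF.pOdd_start, hY.isPEven.not_mem_edges hF.pOdd_start]

theorem hasSkewedTheta_of_two_odd_links {x₁ x₂ y₁ y₂ : V} {X : G.Walk x₁ x₂}
    {Y : G.Walk y₁ y₂} (hX : IsEvenLink A R₁ R₂ X) (hY : IsEvenLink A R₁ R₂ Y)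
    (hXY : WalkEdgeDisjoint X Y) (hXodd : ¬ (x₁ ∈ A ↔ x₂ ∈ A)) (hYodd : ¬ (y₁ ∈ A ↔ y₂ ∈ A))
    (hside : x₁ ∈ A ↔ y₁ ∈ A) :
    HasSkewedTheta G := by
  wlog h₁ : y₁ ∈ (R₁.dropUntil x₁ hX.mem_left).support generalizing x₁ x₂ y₁ y₂
  · exact this hY hX (fun e hY hX => hXY e hX hY) hYodd hXodd hside.symm
      ((R₁.mem_support_dropUntil_or hX.mem_left hY.mem_left).resolve_left h₁)
  rcases R₂.mem_support_dropUntil_or hX.mem_right hY.mem_right with h₂ | h₂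
  · exact hF.hasSkewedTheta_of_parallel_links hX hY hXY hXodd h₁ h₂
  · exact hF.hasSkewedTheta_of_crossing_links hX hY hXY (by tauto) h₁ h₂

theorem hasSkewedTheta_of_three_odd_links {p₁ p₂ q₁ q₂ t₁ t₂ : V} {P : G.Walk p₁ p₂}
    {Q : G.Walk q₁ q₂} {T : G.Walk t₁ t₂} (hP : IsEvenLink A R₁ R₂ P)
    (hQ : IsEvenLink A R₁ R₂ Q) (hT : IsEvenLink A R₁ R₂ T) (hPQ : WalkEdgeDisjoint P Q)
    (hPT : WalkEdgeDisjoint P T) (hQT : WalkEdgeDisjoint Q T) (hPodd : ¬ (p₁ ∈ A ↔ p₂ ∈ A))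
    (hQodd : ¬ (q₁ ∈ A ↔ q₂ ∈ A)) (hTodd : ¬ (t₁ ∈ A ↔ t₂ ∈ A)) :
    HasSkewedTheta G := by
  by_cases hpq : p₁ ∈ A ↔ q₁ ∈ A
  · exact hF.hasSkewedTheta_of_two_odd_links hP hQ hPQ hPodd hQodd hpq
  by_cases hpt : p₁ ∈ A ↔ t₁ ∈ A
  · exact hF.hasSkewedTheta_of_two_odd_links hP hT hPT hPodd hTodd hpt
  · exact hF.hasSkewedTheta_of_two_odd_links hQ hT hQT hQodd hTodd (by tauto)

lemma eq_start_of_mem_left_of_edges_eq (h : s(r₁, r₂) = s(s₁, s₂)) {x : V}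
    (hx : x ∈ R₁.support) : x = r₁ := by
  obtain rfl : r₁ = s₁ := by
    rcases Sym2.eq_iff.mp h with ⟨h₁, -⟩ | ⟨h₁, -⟩
    · exact h₁
    · exact absurd (h₁ ▸ R₂.end_mem_support) (hF.disjoint R₁.start_mem_support)
  rw [nil_iff_support_eq.mp (isPath_iff_nil.mp hF.isPath_left)] at hx
  exact List.mem_singleton.mp hx

end IsEvenFrame

end Frame

lemma Subcubic.false_of_three_edgeDisjoint_pEven_walks [Fintype V] {G : SimpleGraph V}
    (h3 : Subcubic G) {A : Set V} {v w a b c : V} (hvw : G.Adj v w) (hodd : POdd A s(v, w))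
    {P : G.Walk v a} {Q : G.Walk v b} {T : G.Walk v c}
    (hPl : 0 < P.length) (hQl : 0 < Q.length) (hTl : 0 < T.length)
    (hPe : P.IsPEven A) (hQe : Q.IsPEven A) (hTe : T.IsPEven A)
    (hPQ : WalkEdgeDisjoint P Q) (hPT : WalkEdgeDisjoint P T) (hQT : WalkEdgeDisjoint Q T) :
    False := by
  have hzP := mk_start_snd_mem_edges (not_nil_iff_lt_length.mpr hPl)
  have hzQ := mk_start_snd_mem_edges (not_nil_iff_lt_length.mpr hQl)
  have hzT := mk_start_snd_mem_edges (not_nil_iff_lt_length.mpr hTl)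
  set zP := P.snd
  set zQ := Q.snd
  set zT := T.snd
  have hne : ∀ {u z : V} {W : G.Walk v u}, W.IsPEven A → s(v, z) ∈ W.edges → z ≠ w :=
    fun hW hz hzw => hW.not_mem_edges hodd (hzw ▸ hz)
  have hsub : ({w, zP, zQ, zT} : Set V) ⊆ G.neighborSet v := by
    simp only [Set.insert_subset_iff, Set.singleton_subset_iff, mem_neighborSet]
    exact ⟨hvw, P.adj_of_mem_edges hzP, Q.adj_of_mem_edges hzQ, T.adj_of_mem_edges hzT⟩
  have hcard : ({w, zP, zQ, zT} : Set V).ncard = 4 := by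
    have hPQ' : zP ≠ zQ := fun h => hPQ _ hzP (h ▸ hzQ)
    have hPT' : zP ≠ zT := fun h => hPT _ hzP (h ▸ hzT)
    have hQT' : zQ ≠ zT := fun h => hQT _ hzQ (h ▸ hzT)
    rw [Set.ncard_insert_of_notMem, Set.ncard_insert_of_notMem, Set.ncard_pair hQT']
    · simp [hPQ', hPT']
    · simp [(hne hPe hzP).symm, (hne hQe hzQ).symm, (hne hTe hzT).symm]
  have := Set.ncard_le_ncard hsub
  have := h3 v
  omega

theorem stmt_6_general {V : Type u} [Fintype V] (G : SimpleGraph V) (h3 : Subcubic G)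
    (A : Set V)
    (r₁ r₂ s₁ s₂ : V) (hr : G.Adj r₁ r₂) (hs : G.Adj s₁ s₂)
    (hro : POdd A s(r₁, r₂)) (hso : POdd A s(s₁, s₂))
    (R₁ : G.Walk r₁ s₁) (R₂ : G.Walk r₂ s₂) (hR₁ : R₁.IsPath) (hR₂ : R₂.IsPath)
    (hRdisj : R₁.support.Disjoint R₂.support)
    (hRe₁ : ∀ e ∈ R₁.edges, ¬ POdd A e) (hRe₂ : ∀ e ∈ R₂.edges, ¬ POdd A e)
    (hnst : ¬ HasSkewedTheta G) :
    ¬ ∃ (p₁ p₂ q₁ q₂ t₁ t₂ : V)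
        (P : G.Walk p₁ p₂) (Q : G.Walk q₁ q₂) (T : G.Walk t₁ t₂),
      P.IsPath ∧ Q.IsPath ∧ T.IsPath ∧
      0 < P.length ∧ 0 < Q.length ∧ 0 < T.length ∧
      p₁ ∈ R₁.support ∧ q₁ ∈ R₁.support ∧ t₁ ∈ R₁.support ∧
      p₂ ∈ R₂.support ∧ q₂ ∈ R₂.support ∧ t₂ ∈ R₂.support ∧
      (∀ x ∈ P.support, x ≠ p₁ → x ≠ p₂ → x ∉ R₁.support ∧ x ∉ R₂.support) ∧
      (∀ x ∈ Q.support, x ≠ q₁ → x ≠ q₂ → x ∉ R₁.support ∧ x ∉ R₂.support) ∧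
      (∀ x ∈ T.support, x ≠ t₁ → x ≠ t₂ → x ∉ R₁.support ∧ x ∉ R₂.support) ∧
      (∀ e ∈ P.edges, ¬ POdd A e) ∧ (∀ e ∈ Q.edges, ¬ POdd A e) ∧
      (∀ e ∈ T.edges, ¬ POdd A e) ∧
      WalkEdgeDisjoint P Q ∧ WalkEdgeDisjoint P T ∧ WalkEdgeDisjoint Q T := by
  rintro ⟨p₁, p₂, q₁, q₂, t₁, t₂, P, Q, T, hPp, hQp, hTp, hPl, hQl, hTl, hp₁, hq₁, ht₁,
    hp₂, hq₂, ht₂, hPi, hQi, hTi, hPe, hQe, hTe, hPQ, hPT, hQT⟩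
  have hF : IsEvenFrame A R₁ R₂ := ⟨hr, hs, hro, hso, hR₁, hR₂, hRdisj, hRe₁, hRe₂⟩
  by_cases hne : s(r₁, r₂) = s(s₁, s₂)
  · obtain rfl := hF.eq_start_of_mem_left_of_edges_eq hne hp₁
    obtain rfl := hF.eq_start_of_mem_left_of_edges_eq hne hq₁
    obtain rfl := hF.eq_start_of_mem_left_of_edges_eq hne ht₁
    exact h3.false_of_three_edgeDisjoint_pEven_walks hr hro hPl hQl hTl hPe hQe hTe hPQ hPT hQT
  have hP : IsEvenLink A R₁ R₂ P := ⟨hPp, hp₁, hp₂, hPe, hPi⟩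
  have hQ : IsEvenLink A R₁ R₂ Q := ⟨hQp, hq₁, hq₂, hQe, hQi⟩
  have hT : IsEvenLink A R₁ R₂ T := ⟨hTp, ht₁, ht₂, hTe, hTi⟩
  by_cases hPeven : p₁ ∈ A ↔ p₂ ∈ A
  · exact hnst (hF.hasSkewedTheta_of_even_link hne hP hPeven)
  by_cases hQeven : q₁ ∈ A ↔ q₂ ∈ A
  · exact hnst (hF.hasSkewedTheta_of_even_link hne hQ hQeven)
  by_cases hTeven : t₁ ∈ A ↔ t₂ ∈ A
  · exact hnst (hF.hasSkewedTheta_of_even_link hne hT hTeven)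
  exact hnst (hF.hasSkewedTheta_of_three_odd_links hP hQ hT hPQ hPT hQT hPeven hQeven hTeven)

/-- in a subcubic graph with bipartition `(A,B)`, two P-odd edges
`r₁r₂`, `s₁s₂` and disjoint P-even paths `R₁ = r₁…s₁`, `R₂ = r₂…s₂`: if `G` has no
skewed theta then there are no three pairwise edge-disjoint `R₁`–`R₂`-paths consisting
of P-even edges. -/
theorem stmt_6 {V : Type u} [Fintype V] (G : SimpleGraph V) (h3 : Subcubic G)
    (A B : Set V) (hd : Disjoint A B) (hu : A ∪ B = Set.univ)
    (r₁ r₂ s₁ s₂ : V) (hr : G.Adj r₁ r₂) (hs : G.Adj s₁ s₂)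
    (hro : POdd A s(r₁, r₂)) (hso : POdd A s(s₁, s₂))
    (R₁ : G.Walk r₁ s₁) (R₂ : G.Walk r₂ s₂) (hR₁ : R₁.IsPath) (hR₂ : R₂.IsPath)
    (hRdisj : R₁.support.Disjoint R₂.support)
    (hRe₁ : ∀ e ∈ R₁.edges, ¬ POdd A e) (hRe₂ : ∀ e ∈ R₂.edges, ¬ POdd A e)
    (hnst : ¬ HasSkewedTheta G) :
    ¬ ∃ (p₁ p₂ q₁ q₂ t₁ t₂ : V)
        (P : G.Walk p₁ p₂) (Q : G.Walk q₁ q₂) (T : G.Walk t₁ t₂),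
      P.IsPath ∧ Q.IsPath ∧ T.IsPath ∧
      0 < P.length ∧ 0 < Q.length ∧ 0 < T.length ∧
      p₁ ∈ R₁.support ∧ q₁ ∈ R₁.support ∧ t₁ ∈ R₁.support ∧
      p₂ ∈ R₂.support ∧ q₂ ∈ R₂.support ∧ t₂ ∈ R₂.support ∧
      (∀ x ∈ P.support, x ≠ p₁ → x ≠ p₂ → x ∉ R₁.support ∧ x ∉ R₂.support) ∧
      (∀ x ∈ Q.support, x ≠ q₁ → x ≠ q₂ → x ∉ R₁.support ∧ x ∉ R₂.support) ∧
      (∀ x ∈ T.support, x ≠ t₁ → x ≠ t₂ → x ∉ R₁.support ∧ x ∉ R₂.support) ∧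
      (∀ e ∈ P.edges, ¬ POdd A e) ∧ (∀ e ∈ Q.edges, ¬ POdd A e) ∧
      (∀ e ∈ T.edges, ¬ POdd A e) ∧
      WalkEdgeDisjoint P Q ∧ WalkEdgeDisjoint P T ∧ WalkEdgeDisjoint Q T :=
  stmt_6_general G h3 A r₁ r₂ s₁ s₂ hr hs hro hso R₁ R₂ hR₁ hR₂ hRdisj hRe₁ hRe₂ hnst
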